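/- With γ_m = 4·16^{−m}·∑_{b=0}^{m−1} binom(2m−2,2b)·C_{m−1−b}·C_b and γ = ∑_{m=1}^∞ γ_m, for every integer M ≥ 2 one has ∑_{m=1}^{M} γ_m ≤ γ ≤ ∑_{m=1}^{M} γ_m + 1/(4(M−1)). -/

import Mathlib

/-- The `m`-th term `γ_m = 4·16^{−m}·∑_{b=0}^{m−1} C(2m−2, 2b)·C_{m−1−b}·C_b`
of the series defining the isolated-vertex constant `γ`. -/
noncomputable def gammaTerm (m : ℕ) : ℝ :=
  4 * ((16 : ℝ) ^ m)⁻¹ *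
    ∑ b ∈ Finset.range m,
      (Nat.choose (2 * m - 2) (2 * b) : ℝ) * (catalan (m - 1 - b) : ℝ) * (catalan b : ℝ)

/-
The inner sum has the closed form `∑_b C(2n, 2b) C_{n-b} C_b = C_n C_{n+1}`: writing everything in
factorials, `C(2n, 2b) C_{n-b} C_b = (2n)! / (n+1)!² · C(n+1, b) C(n+1, b+1)`, and Vandermonde sums
the right-hand side. Hence `γ_{n+1} = 4 C_n C_{n+1} / 16^{n+1}`. The recurrence
`(n+2) C_{n+1} = 2(2n+1) C_n` gives `n(n+1) C_n C_{n+1} ≤ 16^n` by induction, so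
`γ_{n+2} ≤ 1/(4(n+1)(n+2)) = 1/(4(n+1)) - 1/(4(n+2))`. This telescopes: the terms are nonnegative
and the tail after `M` is at most `1/(4M) ≤ 1/(4(M-1))`.
-/

open Finset Nat

theorem catalan_eq_factorial_div (n : ℕ) :
    (catalan n : ℚ) = (2 * n)! / (n ! * (n + 1)!) := by
  have h := congrArg (Nat.cast (R := ℚ)) (succ_mul_catalan_eq_centralBinom n)
  rw [centralBinom_eq_two_mul_choose, Nat.cast_choose ℚ (by omega : n ≤ 2 * n),
    show 2 * n - n = n by omega] at h
  push_cast [Nat.factorial_succ] at h ⊢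
  field_simp at h ⊢
  linarith

theorem sum_range_choose_mul_choose_succ (n : ℕ) :
    ∑ b ∈ range (n + 1), (n + 1).choose b * (n + 1).choose (b + 1) = (2 * n + 2).choose n := by
  rw [show 2 * n + 2 = (n + 1) + (n + 1) by ring, add_choose_eq,
    Finset.Nat.sum_antidiagonal_eq_sum_range_succ_mk]
  refine sum_congr rfl fun b hb => ?_
  rw [← choose_symm (show n - b ≤ n + 1 by omega), show n + 1 - (n - b) = b + 1 by
    have := mem_range.mp hb; omega]

theorem choose_mul_catalan_mul_catalan {n b : ℕ} (hb : b ≤ n) :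
    ((2 * n).choose (2 * b) * catalan (n - b) * catalan b : ℚ)
      = (2 * n)! / (n + 1)! ^ 2 * ((n + 1).choose b * (n + 1).choose (b + 1)) := by
  obtain ⟨a, rfl⟩ := Nat.exists_eq_add_of_le' hb
  rw [Nat.cast_choose ℚ (by omega : 2 * b ≤ 2 * (a + b)),
    Nat.cast_choose ℚ (by omega : b + 1 ≤ a + b + 1),
    Nat.cast_choose ℚ (by omega : b ≤ a + b + 1), catalan_eq_factorial_div,
    catalan_eq_factorial_div, show 2 * (a + b) - 2 * b = 2 * a by omega,
    show a + b + 1 - (b + 1) = a by omega, show a + b + 1 - b = a + 1 by omega, Nat.add_sub_cancel]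
  field_simp

theorem sum_choose_mul_catalan_mul_catalan (n : ℕ) :
    ∑ b ∈ range (n + 1), (2 * n).choose (2 * b) * catalan (n - b) * catalan b
      = catalan n * catalan (n + 1) := by
  apply Nat.cast_injective (R := ℚ)
  push_cast
  calc ∑ b ∈ range (n + 1), ((2 * n).choose (2 * b) * catalan (n - b) * catalan b : ℚ)
      = (2 * n)! / (n + 1)! ^ 2 *
          ∑ b ∈ range (n + 1), ((n + 1).choose b * (n + 1).choose (b + 1) : ℚ) := by
        rw [mul_sum]
        exact sum_congr rfl fun b hb => choose_mul_catalan_mul_catalan (mem_range_succ_iff.mp hb)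
    _ = (2 * n)! / (n + 1)! ^ 2 * (2 * n + 2).choose n := by
        rw [← sum_range_choose_mul_choose_succ]; push_cast; rfl
    _ = catalan n * catalan (n + 1) := by
        rw [Nat.cast_choose ℚ (by omega), catalan_eq_factorial_div, catalan_eq_factorial_div,
          show 2 * n + 2 - n = n + 2 by omega, show 2 * (n + 1) = 2 * n + 2 by ring]
        field_simp

theorem succ_succ_mul_catalan_succ (n : ℕ) :
    (n + 2) * catalan (n + 1) = 2 * (2 * n + 1) * catalan n := by
  have h := succ_mul_centralBinom_succ n
  rw [← succ_mul_catalan_eq_centralBinom, ← succ_mul_catalan_eq_centralBinom] at h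
  exact Nat.eq_of_mul_eq_mul_left n.succ_pos (by linarith)

theorem mul_succ_mul_catalan_mul_catalan_succ_le (n : ℕ) :
    n * (n + 1) * (catalan n * catalan (n + 1)) ≤ 16 ^ n := by
  rcases Nat.eq_zero_or_pos n with rfl | hn
  · simp
  induction n, hn using Nat.le_induction with
  | base => simp [catalan_one, catalan_two]
  | succ m hm ih =>
    have step : (m + 1) * (m + 2) * (catalan (m + 1) * catalan (m + 2)) * (m * (m + 3))
        = 4 * (2 * m + 1) * (2 * m + 3) * (m * (m + 1) * (catalan m * catalan (m + 1))) := by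
      calc _ = m * (m + 1) * ((m + 2) * catalan (m + 1)) * ((m + 3) * catalan (m + 2)) := by ring
        _ = _ := by rw [succ_succ_mul_catalan_succ, succ_succ_mul_catalan_succ]; ring
    -- `4 (2m+1)(2m+3) ≤ 16 m (m+3)` holds only from `m = 1` on, hence the induction base.
    refine Nat.le_of_mul_le_mul_right ?_ (show 0 < m * (m + 3) by positivity)
    calc _ = _ := step
      _ ≤ 4 * (2 * m + 1) * (2 * m + 3) * 16 ^ m := Nat.mul_le_mul_left _ ih
      _ ≤ 16 * (m * (m + 3)) * 16 ^ m := Nat.mul_le_mul_right _ (by nlinarith)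
      _ = 16 ^ (m + 1) * (m * (m + 3)) := by ring

theorem gammaTerm_succ (n : ℕ) :
    gammaTerm (n + 1) = 4 * (catalan n * catalan (n + 1)) / 16 ^ (n + 1) := by
  have h := congrArg (Nat.cast (R := ℝ)) (sum_choose_mul_catalan_mul_catalan n)
  push_cast at h
  rw [gammaTerm, show 2 * (n + 1) - 2 = 2 * n by omega, Nat.add_sub_cancel, h]
  ring

theorem gammaTerm_zero : gammaTerm 0 = 0 := by
  simp [gammaTerm]

theorem gammaTerm_nonneg (m : ℕ) : 0 ≤ gammaTerm m := by
  unfold gammaTerm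
  positivity

theorem gammaTerm_add_two_le (n : ℕ) :
    gammaTerm (n + 2) ≤ 1 / (4 * ((n : ℝ) + 1)) - 1 / (4 * ((n : ℝ) + 2)) := by
  have h : ((n : ℝ) + 1) * (n + 2) * (catalan (n + 1) * catalan (n + 2)) ≤ 16 ^ (n + 1) := by
    exact_mod_cast mul_succ_mul_catalan_mul_catalan_succ_le (n + 1)
  rw [gammaTerm_succ]
  calc 4 * ((catalan (n + 1) : ℝ) * catalan (n + 1 + 1)) / 16 ^ (n + 1 + 1)
      = (n + 1) * (n + 2) * (catalan (n + 1) * catalan (n + 2)) /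
          (4 * ((n + 1) * (n + 2)) * 16 ^ (n + 1)) := by
        field_simp; ring
    _ ≤ 16 ^ (n + 1) / (4 * ((n + 1) * (n + 2)) * 16 ^ (n + 1)) := by gcongr
    _ = _ := by field_simp; ring

theorem sum_range_le_of_le_sub_succ {f g : ℕ → ℝ} (hg : ∀ n, 0 ≤ g n)
    (hfg : ∀ n, f n ≤ g n - g (n + 1)) (N : ℕ) : ∑ i ∈ range N, f i ≤ g 0 :=
  calc ∑ i ∈ range N, f i ≤ ∑ i ∈ range N, (g i - g (i + 1)) :=
        sum_le_sum fun i _ => hfg i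
    _ = g 0 - g N := sum_range_sub' g N
    _ ≤ g 0 := sub_le_self _ (hg N)

theorem sum_range_succ_eq_sum_Icc_one {β : Type*} [AddCommMonoid β] {f : ℕ → β} (hf : f 0 = 0)
    (n : ℕ) : ∑ i ∈ range (n + 1), f i = ∑ i ∈ Icc 1 n, f i := by
  rw [range_eq_Ico, sum_eq_sum_Ico_succ_bot n.succ_pos, hf, zero_add]
  rfl

/-- with `γ = ∑_{m≥1} γ_m`, for every `M ≥ 2` one has
`∑_{m=1}^{M} γ_m ≤ γ ≤ ∑_{m=1}^{M} γ_m + 1/(4(M−1))`. -/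
theorem gamma_partial_sum_bounds (M : ℕ) (hM : 2 ≤ M) :
    ∑ m ∈ Finset.Icc 1 M, gammaTerm m ≤ (∑' m : ℕ, gammaTerm m) ∧
    (∑' m : ℕ, gammaTerm m) ≤ ∑ m ∈ Finset.Icc 1 M, gammaTerm m + 1 / (4 * ((M : ℝ) - 1)) := by
  obtain ⟨k, rfl⟩ : ∃ k, M = k + 2 := ⟨M - 2, by omega⟩
  set g : ℕ → ℝ := fun i => 1 / (4 * ((i + k : ℕ) + 2 : ℝ))
  have tail_le (i : ℕ) : gammaTerm (i + (k + 2 + 1)) ≤ g i - g (i + 1) := by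
    rw [show i + (k + 2 + 1) = (i + k + 1) + 2 by ring]
    convert gammaTerm_add_two_le (i + k + 1) using 4 <;> push_cast <;> ring
  have hg (i : ℕ) : 0 ≤ g i := by positivity
  have tail_partial_le := sum_range_le_of_le_sub_succ hg tail_le
  have tail_summable := summable_of_sum_range_le (fun i => gammaTerm_nonneg _) tail_partial_le
  have tail_tsum_le := Real.tsum_le_of_sum_range_le (fun i => gammaTerm_nonneg _) tail_partial_le
  have sum_add_tail :=
    ((summable_nat_add_iff (k + 2 + 1)).mp tail_summable).sum_add_tsum_nat_add (k + 2 + 1)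
  rw [sum_range_succ_eq_sum_Icc_one gammaTerm_zero] at sum_add_tail
  have g_zero : g 0 ≤ 1 / (4 * (((k + 2 : ℕ) : ℝ) - 1)) := by
    simp only [g]; push_cast
    gcongr <;> linarith
  have tail_nonneg : 0 ≤ ∑' i, gammaTerm (i + (k + 2 + 1)) :=
    tsum_nonneg fun i => gammaTerm_nonneg _
  constructor <;> linarith
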